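/- (Descending building) Let I be a set. Suppose given tt-categories with small coproducts D, T and, for each i ∈ I, D_i and T_i, together with coproduct-preserving tt-functors τ : D → T, τ_i : D_i → T_i, f_i : D → D_i, and g_i : T → T_i such that τ_i ∘ f_i is naturally isomorphic to g_i ∘ τ for every i. Suppose each f_i has a right adjoint u_i and each g_i has a right adjoint v_i, and assume: (1) v_i(τ_i(1_{D_i})) ≅ τ(u_i(1_{D_i})) for every i ∈ I (the square is horizontally right adjointable at the monoidal unit); (2) 1_D ∈ Loc^⊗(∐_{i∈I} u_i(1_{D_i})). Then 1_T ∈ Loc^⊗(∐_{i∈I} v_i(1_{T_i})). -/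

import Mathlib

open CategoryTheory Limits Pretriangulated MonoidalCategory

universe w v u v' u' v'' u''

section LocDefs

variable {C : Type u} [Category.{v} C] [HasZeroObject C] [HasShift C ℤ] [Preadditive C]
  [∀ n : ℤ, (shiftFunctor C n).Additive] [Pretriangulated C]

/-- A class of objects of a pretriangulated category is *localizing* if it is closed under
isomorphisms, shifts in both directions, extensions (if two terms of a distinguished triangle
lie in the class, so does the third) and all existing small coproducts. -/
structure IsLocalizing (P : Set C) : Prop where
  of_iso : ∀ {x y : C}, (x ≅ y) → x ∈ P → y ∈ P
  shift : ∀ (n : ℤ) {x : C}, x ∈ P → (shiftFunctor C n).obj x ∈ P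
  ext₃ : ∀ T ∈ distTriang C, Triangle.obj₁ T ∈ P → Triangle.obj₂ T ∈ P → Triangle.obj₃ T ∈ P
  ext₂ : ∀ T ∈ distTriang C, Triangle.obj₁ T ∈ P → Triangle.obj₃ T ∈ P → Triangle.obj₂ T ∈ P
  ext₁ : ∀ T ∈ distTriang C, Triangle.obj₂ T ∈ P → Triangle.obj₃ T ∈ P → Triangle.obj₁ T ∈ P
  coprod : ∀ {J : Type w} (f : J → C) [HasCoproduct f], (∀ j, f j ∈ P) → (∐ f) ∈ P

/-- A localizing class of objects is a *localizing tensor-ideal class* if it is moreover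
closed under tensoring with arbitrary objects. -/
structure IsLocalizingTensorIdeal [MonoidalCategory C] (P : Set C) extends
    IsLocalizing.{w} P : Prop where
  tensor : ∀ (a : C) {x : C}, x ∈ P → (a ⊗ x) ∈ P

/-- `x` belongs to the localizing subcategory `Loc(S)` generated by `S`: every localizing
class containing `S` contains `x`. -/
def LocMem (S : Set C) (x : C) : Prop :=
  ∀ P : Set C, IsLocalizing.{w} P → S ⊆ P → x ∈ P

/-- `x` belongs to the localizing tensor-ideal `Loc^⊗(S)` generated by `S`: every localizing
tensor-ideal class containing `S` contains `x`. -/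
def LocTensorMem [MonoidalCategory C] (S : Set C) (x : C) : Prop :=
  ∀ P : Set C, IsLocalizingTensorIdeal.{w} P → S ⊆ P → x ∈ P

end LocDefs

/-!
A coproduct-preserving tt-functor `τ` maps `Loc^⊗(S)` into `Loc^⊗(τ S)`, because the preimage
under `τ` of a localizing tensor-ideal is again one (for tensor-closure, `τ (a ⊗ x) ≅ τ a ⊗ τ x`).
Adjointability at the unit gives `τ (∐ uᵢ 𝟙) ≅ ∐ vᵢ (τᵢ 𝟙) ≅ ∐ vᵢ 𝟙`, so applying `τ` to
`𝟙_D ∈ Loc^⊗(∐ uᵢ 𝟙)` yields `𝟙_T ≅ τ 𝟙_D ∈ Loc^⊗(∐ vᵢ 𝟙)`.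
-/

section Membership

variable {C : Type u} [Category.{v} C] [HasZeroObject C] [HasShift C ℤ] [Preadditive C]
  [∀ n : ℤ, (shiftFunctor C n).Additive] [Pretriangulated C] [MonoidalCategory C] {S : Set C}

theorem LocTensorMem.of_mem {x : C} (hx : x ∈ S) : LocTensorMem.{w} S x :=
  fun _ _ hSP => hSP hx

theorem LocTensorMem.of_iso {x y : C} (e : x ≅ y) (hx : LocTensorMem.{w} S x) :
    LocTensorMem.{w} S y :=
  fun P hP hSP => hP.of_iso e (hx P hP hSP)

end Membership

section Preimage

variable {C : Type u} [Category.{v} C] [HasZeroObject C] [HasShift C ℤ] [Preadditive C]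
  [∀ n : ℤ, (shiftFunctor C n).Additive] [Pretriangulated C]
  {E : Type u'} [Category.{v'} E] [HasZeroObject E] [HasShift E ℤ] [Preadditive E]
  [∀ n : ℤ, (shiftFunctor E n).Additive] [Pretriangulated E] [HasCoproducts.{w} E]
  (F : C ⥤ E) [F.CommShift ℤ] [F.IsTriangulated]
  [∀ J : Type w, PreservesColimitsOfShape (Discrete J) F]

theorem IsLocalizing.preimage {Q : Set E} (hQ : IsLocalizing.{w} Q) :
    IsLocalizing.{w} (F.obj ⁻¹' Q) where
  of_iso e hx := hQ.of_iso (F.mapIso e) hx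
  shift n x hx := hQ.of_iso ((F.commShiftIso n).app x).symm (hQ.shift n hx)
  ext₃ T hT := hQ.ext₃ _ (F.map_distinguished T hT)
  ext₂ T hT := hQ.ext₂ _ (F.map_distinguished T hT)
  ext₁ T hT := hQ.ext₁ _ (F.map_distinguished T hT)
  coprod c _ hc :=
    hQ.of_iso (PreservesCoproduct.iso F c).symm (hQ.coprod (fun j => F.obj (c j)) hc)

variable [MonoidalCategory C] [MonoidalCategory E] [F.Monoidal]

theorem IsLocalizingTensorIdeal.preimage {Q : Set E} (hQ : IsLocalizingTensorIdeal.{w} Q) :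
    IsLocalizingTensorIdeal.{w} (F.obj ⁻¹' Q) where
  toIsLocalizing := hQ.toIsLocalizing.preimage F
  tensor a x hx := hQ.of_iso (Functor.Monoidal.μIso F a x) (hQ.tensor (F.obj a) hx)

theorem LocTensorMem.map {S : Set C} {S' : Set E} {x : C} (hx : LocTensorMem.{w} S x)
    (hS : ∀ s ∈ S, LocTensorMem.{w} S' (F.obj s)) : LocTensorMem.{w} S' (F.obj x) :=
  fun Q hQ hS'Q => hx (F.obj ⁻¹' Q) (hQ.preimage F) fun s hs => hS s hs Q hQ hS'Q

end Preimage

/-- (Descending building) Given coproduct-preserving tt-functors `τ : D ⥤ T`,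
`τi i : Di i ⥤ Ti i`, `f i : D ⥤ Di i` and `g i : T ⥤ Ti i` between tt-categories with
small coproducts with `τi i ∘ f i ≅ g i ∘ τ` for every `i`, right adjoints `u i` of `f i`
and `v i` of `g i`, such that (1) each square is horizontally right adjointable at the
monoidal unit and (2) `𝟙_ D ∈ Loc^⊗(∐ᵢ (u i).obj (𝟙_ (Di i)))`, one has
`𝟙_ T ∈ Loc^⊗(∐ᵢ (v i).obj (𝟙_ (Ti i)))`. -/
theorem descending_building
    {I : Type w}
    -- `D` is a tt-category with small coproducts
    {D : Type u} [Category.{v} D] [HasZeroObject D] [HasShift D ℤ] [Preadditive D]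
    [∀ n : ℤ, (shiftFunctor D n).Additive] [Pretriangulated D]
    [MonoidalCategory D] [SymmetricCategory D] [HasCoproducts.{w} D]
    [∀ a : D, (tensorLeft a).CommShift ℤ] [∀ a : D, (tensorLeft a).IsTriangulated]
    [∀ (a : D) (J : Type w), PreservesColimitsOfShape (Discrete J) (tensorLeft a)]
    -- `T` is a tt-category with small coproducts
    {T : Type u'} [Category.{v'} T] [HasZeroObject T] [HasShift T ℤ] [Preadditive T]
    [∀ n : ℤ, (shiftFunctor T n).Additive] [Pretriangulated T]
    [MonoidalCategory T] [SymmetricCategory T] [HasCoproducts.{w} T]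
    [∀ a : T, (tensorLeft a).CommShift ℤ] [∀ a : T, (tensorLeft a).IsTriangulated]
    [∀ (a : T) (J : Type w), PreservesColimitsOfShape (Discrete J) (tensorLeft a)]
    -- each `Di i` is a tt-category with small coproducts
    {Di : I → Type u''} [∀ i, Category.{v''} (Di i)] [∀ i, HasZeroObject (Di i)]
    [∀ i, HasShift (Di i) ℤ] [∀ i, Preadditive (Di i)]
    [∀ (i : I) (n : ℤ), (shiftFunctor (Di i) n).Additive] [∀ i, Pretriangulated (Di i)]
    [∀ i, MonoidalCategory (Di i)] [∀ i, SymmetricCategory (Di i)]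
    [∀ i, HasCoproducts.{w} (Di i)]
    [∀ (i : I) (a : Di i), (tensorLeft a).CommShift ℤ]
    [∀ (i : I) (a : Di i), (tensorLeft a).IsTriangulated]
    [∀ (i : I) (a : Di i) (J : Type w), PreservesColimitsOfShape (Discrete J) (tensorLeft a)]
    -- each `Ti i` is a tt-category with small coproducts
    {Ti : I → Type u''} [∀ i, Category.{v''} (Ti i)] [∀ i, HasZeroObject (Ti i)]
    [∀ i, HasShift (Ti i) ℤ] [∀ i, Preadditive (Ti i)]
    [∀ (i : I) (n : ℤ), (shiftFunctor (Ti i) n).Additive] [∀ i, Pretriangulated (Ti i)]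
    [∀ i, MonoidalCategory (Ti i)] [∀ i, SymmetricCategory (Ti i)]
    [∀ i, HasCoproducts.{w} (Ti i)]
    [∀ (i : I) (a : Ti i), (tensorLeft a).CommShift ℤ]
    [∀ (i : I) (a : Ti i), (tensorLeft a).IsTriangulated]
    [∀ (i : I) (a : Ti i) (J : Type w), PreservesColimitsOfShape (Discrete J) (tensorLeft a)]
    -- `τ : D ⥤ T` is a coproduct-preserving tt-functor
    (τ : D ⥤ T)
    [τ.Additive] [τ.CommShift ℤ] [τ.IsTriangulated] [τ.Monoidal]
    [∀ J : Type w, PreservesColimitsOfShape (Discrete J) τ]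
    -- each `τi i : Di i ⥤ Ti i` is a coproduct-preserving tt-functor
    (τi : ∀ i, Di i ⥤ Ti i)
    [∀ i, (τi i).Additive] [∀ i, (τi i).CommShift ℤ] [∀ i, (τi i).IsTriangulated]
    [∀ i, (τi i).Monoidal]
    [∀ (i : I) (J : Type w), PreservesColimitsOfShape (Discrete J) (τi i)]
    -- each `f i : D ⥤ Di i` is a coproduct-preserving tt-functor
    (f : ∀ i, D ⥤ Di i)
    [∀ i, (f i).Additive] [∀ i, (f i).CommShift ℤ] [∀ i, (f i).IsTriangulated]
    [∀ i, (f i).Monoidal]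
    [∀ (i : I) (J : Type w), PreservesColimitsOfShape (Discrete J) (f i)]
    -- each `g i : T ⥤ Ti i` is a coproduct-preserving tt-functor
    (g : ∀ i, T ⥤ Ti i)
    [∀ i, (g i).Additive] [∀ i, (g i).CommShift ℤ] [∀ i, (g i).IsTriangulated]
    [∀ i, (g i).Monoidal]
    [∀ (i : I) (J : Type w), PreservesColimitsOfShape (Discrete J) (g i)]
    -- the squares commute: `τi i ∘ f i ≅ g i ∘ τ`
    (sq : ∀ i, Nonempty (f i ⋙ τi i ≅ τ ⋙ g i))
    -- right adjoints
    (u : ∀ i, Di i ⥤ D) (adju : ∀ i, f i ⊣ u i)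
    (v : ∀ i, Ti i ⥤ T) (adjv : ∀ i, g i ⊣ v i)
    -- (1) the squares are horizontally right adjointable at the monoidal unit
    (hadj : ∀ i, Nonempty ((v i).obj ((τi i).obj (𝟙_ (Di i))) ≅ τ.obj ((u i).obj (𝟙_ (Di i)))))
    -- (2) the family `{f i}` builds the tensor unit of `D`
    (hunit : LocTensorMem.{w} {∐ fun i => (u i).obj (𝟙_ (Di i))} (𝟙_ D)) :
    LocTensorMem.{w} {∐ fun i => (v i).obj (𝟙_ (Ti i))} (𝟙_ T) := by
  have hcoprod : τ.obj (∐ fun i => (u i).obj (𝟙_ (Di i))) ≅ ∐ fun i => (v i).obj (𝟙_ (Ti i)) :=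
    PreservesCoproduct.iso τ _ ≪≫ Sigma.mapIso fun i =>
      (hadj i).some.symm ≪≫ (v i).mapIso (Functor.Monoidal.εIso (τi i)).symm
  have hτunit : LocTensorMem.{w} {∐ fun i => (v i).obj (𝟙_ (Ti i))} (τ.obj (𝟙_ D)) :=
    hunit.map τ fun _ hs => hs ▸ (LocTensorMem.of_mem (Set.mem_singleton _)).of_iso hcoprod.symm
  exact hτunit.of_iso (Functor.Monoidal.εIso τ).symm
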